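/- arXiv:1603.09401 — 2 statements merged into one kernel-verified Lean document; each statement's English description precedes it below -/
import Mathlib

section
/- Suppose f_1 = x_1·L_1, ..., f_n = x_n·L_n is a regular sequence in F[x_1,...,x_n], where each L_i is a linear form. Then the class of L_1···L_n is a socle generator of the quotient algebra F[x_1,...,x_n]/⟨f_1,...,f_n⟩; that is, L_1···L_n is nonzero in the quotient and its class spans the annihilator of the maximal ideal generated by x_1,...,x_n. -/
open MvPolynomial

/-- `f 0, f 1, ..., f (k-1)` is a partial regular sequence in `F[x_1,...,x_n]`:
`f 0 ≠ 0` and each subsequent `f i` is a non-zero divisor in the quotient by the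
ideal generated by its predecessors.  A regular sequence is a partial regular
sequence of length `n`. -/
def IsPartialRegSeq (F : Type) [Field F] (σ : Type) {k : ℕ}
    (f : Fin k → MvPolynomial σ F) : Prop :=
  (∀ i : Fin k, i.val = 0 → f i ≠ 0) ∧
  ∀ i : Fin k, 0 < i.val →
    ∀ g : MvPolynomial σ F,
      Ideal.Quotient.mk (Ideal.span (f '' {j | j < i})) (g * f i) = 0 →
      Ideal.Quotient.mk (Ideal.span (f '' {j | j < i})) g = 0

/-- `a` is a socle generator of `F[x_i : i ∈ σ] ⧸ I`: it is nonzero, annihilated by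
the maximal ideal generated by the classes of the variables, and spans the
annihilator of that maximal ideal. -/
def IsSocleGen (F : Type) [Field F] (σ : Type) (I : Ideal (MvPolynomial σ F))
    (a : MvPolynomial σ F ⧸ I) : Prop :=
  a ≠ 0 ∧ (∀ j : σ, Ideal.Quotient.mk I (X j) * a = 0) ∧
    ∀ b : MvPolynomial σ F ⧸ I,
      (∀ j : σ, Ideal.Quotient.mk I (X j) * b = 0) → ∃ c : F, b = c • a

/-!
For `s ⊆ {1, …, n}` let `I_s = (xᵢ Lᵢ : i ∈ s) + (xᵢ : i ∉ s)`. By induction on `s`, the class of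
`∏_{i ∈ s} Lᵢ` spans the socle of `F[x] ⧸ I_s`: for `s = ∅` this is the socle `F · 1` of
`F[x] ⧸ (x)`, and passing from `J + (x_k)` to `J + (x_k L_k)` multiplies the socle generator by
`L_k` as soon as `x_k L_k` is a non-zero-divisor modulo `J`. That last condition comes from the
regular sequence: a regular sequence of homogeneous elements of positive degree stays regular
under permutations, and replacing its last element `ab` by `a` keeps it regular.
-/

open DirectSum

variable {A : Type*} [CommRing A]

def IsNZDMod (I : Ideal A) (a : A) : Prop := ∀ g, g * a ∈ I → g ∈ I

def IsRegularMod : Ideal A → List A → Prop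
  | _, [] => True
  | I, a :: l => IsNZDMod I a ∧ IsRegularMod (Ideal.span {a} ⊔ I) l

theorem IsNZDMod.of_mul_left {I : Ideal A} {a b : A} (h : IsNZDMod I (a * b)) : IsNZDMod I a :=
  fun g hg => h g (by rw [← mul_assoc]; exact I.mul_mem_right b hg)

theorem IsNZDMod.of_mul_right {I : Ideal A} {a b : A} (h : IsNZDMod I (a * b)) : IsNZDMod I b :=
  (mul_comm a b ▸ h).of_mul_left

theorem IsNZDMod.mem_span_singleton_sup_of_mul_mem {J : Ideal A} {x L q : A} (hL : IsNZDMod J L)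
    (hq : q * L ∈ Ideal.span {x * L} ⊔ J) : q ∈ Ideal.span {x} ⊔ J := by
  obtain ⟨w, j, hj, hwj⟩ := Ideal.mem_span_singleton_sup.1 hq
  refine Ideal.mem_span_singleton_sup.2 ⟨w, q - w * x, hL _ ?_, by ring⟩
  rwa [show (q - w * x) * L = j by linear_combination -hwj]

theorem IsNZDMod.span_singleton_sup {I : Ideal A} {a b : A} (ha : IsNZDMod I a)
    (hb : IsNZDMod (Ideal.span {a} ⊔ I) b) : IsNZDMod (Ideal.span {b} ⊔ I) a := by
  intro g hg
  obtain ⟨v, z, hz, hvz⟩ := Ideal.mem_span_singleton_sup.1 hg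
  have hv : v * b ∈ Ideal.span {a} ⊔ I := by
    rw [show v * b = g * a - z by rw [← hvz]; ring]
    exact sub_mem (Ideal.mem_sup_left (Ideal.mul_mem_left _ _ (Ideal.mem_span_singleton_self a)))
      (Ideal.mem_sup_right hz)
  obtain ⟨w, y, hy, rfl⟩ := Ideal.mem_span_singleton_sup.1 (hb v hv)
  have hgw : (g - w * b) * a ∈ I := by
    rw [show (g - w * b) * a = y * b + z by linear_combination -hvz]
    exact add_mem (I.mul_mem_right b hy) hz
  exact Ideal.mem_span_singleton_sup.2 ⟨w, g - w * b, ha _ hgw, by ring⟩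

theorem isRegularMod_concat (I : Ideal A) (l : List A) (a : A) :
    IsRegularMod I (l ++ [a]) ↔ IsRegularMod I l ∧ IsNZDMod (Ideal.ofList l ⊔ I) a := by
  induction l generalizing I with
  | nil => simp [IsRegularMod]
  | cons b l ih =>
    simp only [List.cons_append, IsRegularMod, ih, Ideal.ofList_cons, sup_assoc, sup_left_comm,
      and_assoc]

theorem Fin.image_setOf_lt_succ {α : Type*} {n : ℕ} (f : Fin (n + 1) → α) (i : Fin n) :
    f '' {j | j < i.succ} = insert (f 0) ((fun j => f j.succ) '' {j | j < i}) := by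
  ext y
  simp [Fin.exists_fin_succ, Fin.succ_lt_succ_iff, eq_comm]

theorem isRegularMod_ofFn_iff {n : ℕ} (I : Ideal A) (f : Fin n → A) :
    IsRegularMod I (List.ofFn f) ↔ ∀ i, IsNZDMod (Ideal.span (f '' {j | j < i}) ⊔ I) (f i) := by
  induction n generalizing I with
  | zero => simp [IsRegularMod]
  | succ n ih =>
    rw [List.ofFn_succ, IsRegularMod, ih, Fin.forall_fin_succ]
    simp [Fin.image_setOf_lt_succ, Ideal.span_insert, sup_assoc, sup_left_comm]

theorem List.perm_map_erase_append {α β : Type*} [DecidableEq α] (g : α → β) {l : List α}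
    {k : α} (hk : k ∈ l) : (l.map g).Perm ((l.erase k).map g ++ [g k]) :=
  ((List.perm_cons_erase hk).map g).trans (List.perm_append_singleton _ _).symm

section Graded

variable {S : Type*} [SetLike S A] [AddSubgroupClass S A] (𝒜 : ℕ → S) [GradedRing 𝒜]

theorem isNZDMod_of_forall_homogeneous {I : Ideal A} (hI : I.IsHomogeneous 𝒜) {b : A} {j : ℕ}
    (hb : b ∈ 𝒜 j) (h : ∀ d, ∀ g ∈ 𝒜 d, g * b ∈ I → g ∈ I) : IsNZDMod I b := by
  intro g hg
  rw [hI.mem_iff]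
  intro d
  refine h d _ (SetLike.coe_mem _) ?_
  rw [← coe_decompose_mul_add_of_right_mem 𝒜 hb]
  exact hI.mem_iff.1 hg _

/-- Graded analogue of the Nakayama argument in a Noetherian local ring, the positive degree of
`a` playing the role of `a ∈ 𝔪`. -/
theorem IsNZDMod.of_span_singleton_sup {I : Ideal A} (hI : I.IsHomogeneous 𝒜) {a b : A}
    {i j : ℕ} (hi : 0 < i) (ha : a ∈ 𝒜 i) (hb : b ∈ 𝒜 j)
    (hb' : IsNZDMod (Ideal.span {a} ⊔ I) b) (ha' : IsNZDMod I a) : IsNZDMod I b := by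
  refine isNZDMod_of_forall_homogeneous 𝒜 hI hb fun d => ?_
  induction d using Nat.strong_induction_on with
  | _ d ih =>
  intro g hg hgb
  obtain ⟨v, z, hz, hvz⟩ := Ideal.mem_span_singleton_sup.1 (hb' g (Ideal.mem_sup_right hgb))
  have hzd : (decompose 𝒜 z d : A) ∈ I := hI.mem_iff.1 hz d
  have hg_eq : g = decompose 𝒜 (v * a) d + decompose 𝒜 z d := by
    rw [← decompose_of_mem_same 𝒜 hg, ← hvz, decompose_add, DirectSum.add_apply,
      AddMemClass.coe_add]
  by_cases hid : i ≤ d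
  · rw [coe_decompose_mul_of_right_mem_of_le 𝒜 ha hid] at hg_eq
    -- `g = v' a + z'` with `v'` of degree `d - i < d`, and `v' b a ∈ I`
    have hv : (decompose 𝒜 v (d - i) : A) * b ∈ I := by
      refine ha' _ ?_
      rw [show (decompose 𝒜 v (d - i) : A) * b * a = g * b - decompose 𝒜 z d * b by
        rw [hg_eq]; ring]
      exact sub_mem hgb (I.mul_mem_right b hzd)
    rw [hg_eq]
    exact add_mem (I.mul_mem_right a (ih _ (by omega) _ (SetLike.coe_mem _) hv)) hzd
  · rwa [hg_eq, coe_decompose_mul_of_right_mem_of_not_le 𝒜 ha hid, zero_add]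

variable {𝒜}

theorem IsRegularMod.swap {I : Ideal A} (hI : I.IsHomogeneous 𝒜) {a b : A} {i j : ℕ}
    (hi : 0 < i) (ha : a ∈ 𝒜 i) (hb : b ∈ 𝒜 j) {l : List A}
    (h : IsRegularMod I (a :: b :: l)) : IsRegularMod I (b :: a :: l) := by
  obtain ⟨ha', hb', hl⟩ := h
  exact ⟨hb'.of_span_singleton_sup 𝒜 hI hi ha hb ha', ha'.span_singleton_sup hb',
    by rwa [sup_left_comm]⟩

theorem IsRegularMod.perm {I : Ideal A} (hI : I.IsHomogeneous 𝒜) {l l' : List A}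
    (hl : ∀ a ∈ l, ∃ i, 0 < i ∧ a ∈ 𝒜 i) (hll' : l.Perm l') (h : IsRegularMod I l) :
    IsRegularMod I l' := by
  induction hll' generalizing I with
  | nil => exact h
  | cons a _ ih =>
    obtain ⟨i, -, ha⟩ := hl a List.mem_cons_self
    exact ⟨h.1, ih ((Ideal.homogeneous_span 𝒜 _ (by simpa using ⟨i, ha⟩)).sup hI)
      (fun b hb => hl b (List.mem_cons_of_mem a hb)) h.2⟩
  | swap a b l =>
    obtain ⟨i, hi, hb⟩ := hl b List.mem_cons_self
    obtain ⟨j, -, ha⟩ := hl a (by simp)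
    exact h.swap hI hi hb ha
  | trans h₁ _ ih₁ ih₂ =>
    exact ih₂ hI (fun a ha => hl a (h₁.mem_iff.2 ha)) (ih₁ hI hl h)

theorem isRegularMod_perm_iff {I : Ideal A} (hI : I.IsHomogeneous 𝒜) {l l' : List A}
    (hl : ∀ a ∈ l, ∃ i, 0 < i ∧ a ∈ 𝒜 i) (hll' : l.Perm l') :
    IsRegularMod I l ↔ IsRegularMod I l' :=
  ⟨.perm hI hl hll', .perm hI (fun a ha => hl a (hll'.mem_iff.2 ha)) hll'.symm⟩

variable {ι : Type*} [DecidableEq ι] {x L : ι → A} {I : Ideal A} {l : List ι}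

theorem exists_pos_mem_piecewise (hx : ∀ j, ∃ i, 0 < i ∧ x j ∈ 𝒜 i) (hL : ∀ j, ∃ i, L j ∈ 𝒜 i)
    (u : Finset ι) (j : ι) : ∃ i, 0 < i ∧ u.piecewise x (fun j => x j * L j) j ∈ 𝒜 i := by
  obtain ⟨i, hi, hxj⟩ := hx j
  by_cases hj : j ∈ u
  · exact ⟨i, hi, by rwa [u.piecewise_eq_of_mem _ _ hj]⟩
  · obtain ⟨i', hLj⟩ := hL j
    exact ⟨i + i', by omega, by
      rw [u.piecewise_eq_of_notMem _ _ hj]; exact SetLike.mul_mem_graded hxj hLj⟩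

theorem isRegularMod_map_piecewise_iff_erase_append (hI : I.IsHomogeneous 𝒜)
    (hx : ∀ j, ∃ i, 0 < i ∧ x j ∈ 𝒜 i) (hL : ∀ j, ∃ i, L j ∈ 𝒜 i) (u : Finset ι) {k : ι}
    (hk : k ∈ l) :
    IsRegularMod I (l.map (u.piecewise x fun j => x j * L j)) ↔
      IsRegularMod I ((l.erase k).map (u.piecewise x fun j => x j * L j) ++
        [u.piecewise x (fun j => x j * L j) k]) :=
  isRegularMod_perm_iff hI (List.forall_mem_map.2 fun j _ => exists_pos_mem_piecewise hx hL u j)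
    (List.perm_map_erase_append _ hk)

theorem IsRegularMod.map_piecewise (hI : I.IsHomogeneous 𝒜) (hx : ∀ j, ∃ i, 0 < i ∧ x j ∈ 𝒜 i)
    (hL : ∀ j, ∃ i, L j ∈ 𝒜 i) (hl : l.Nodup) (hmem : ∀ j, j ∈ l)
    (h : IsRegularMod I (l.map fun j => x j * L j)) (u : Finset ι) :
    IsRegularMod I (l.map (u.piecewise x fun j => x j * L j)) := by
  induction u using Finset.induction_on with
  | empty => simpa using h
  | insert k u hk ih =>
    have hk' := (isRegularMod_map_piecewise_iff_erase_append hI hx hL u (hmem k)).1 ih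
    rw [isRegularMod_concat, u.piecewise_eq_of_notMem _ _ hk] at hk'
    have hmap : (l.erase k).map ((insert k u).piecewise x fun j => x j * L j) =
        (l.erase k).map (u.piecewise x fun j => x j * L j) :=
      List.map_congr_left fun j hj => u.piecewise_insert_of_ne _ _ (hl.mem_erase_iff.1 hj).1
    rw [isRegularMod_map_piecewise_iff_erase_append hI hx hL _ (hmem k), isRegularMod_concat, hmap,
      Finset.piecewise_insert_self]
    exact ⟨hk'.1, hk'.2.of_mul_left⟩

theorem IsRegularMod.isNZDMod_piecewise [Fintype ι] (hI : I.IsHomogeneous 𝒜)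
    (hx : ∀ j, ∃ i, 0 < i ∧ x j ∈ 𝒜 i) (hL : ∀ j, ∃ i, L j ∈ 𝒜 i) (hl : l.Nodup)
    (hmem : ∀ j, j ∈ l) (h : IsRegularMod I (l.map fun j => x j * L j)) (s : Finset ι) (k : ι) :
    IsNZDMod (Ideal.span (s.piecewise (fun j => x j * L j) x '' {k}ᶜ) ⊔ I) (x k * L k) := by
  have hreg := (isRegularMod_map_piecewise_iff_erase_append hI hx hL (insert k s)ᶜ (hmem k)).1
    (h.map_piecewise hI hx hL hl hmem _)
  rw [isRegularMod_concat, Finset.piecewise_compl, Finset.piecewise_insert_self] at hreg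
  have hgens : {y | y ∈ (l.erase k).map ((insert k s).piecewise (fun j => x j * L j) x)} =
      s.piecewise (fun j => x j * L j) x '' {k}ᶜ := by
    ext y
    simp only [Set.mem_ofPred_eq, List.mem_map, hl.mem_erase_iff, Set.mem_image,
      Set.mem_compl_singleton_iff, hmem, and_true]
    exact exists_congr fun j => and_congr_right fun hj => by
      rw [s.piecewise_insert_of_ne _ _ hj]
  rw [Ideal.ofList, hgens] at hreg
  exact hreg.2

end Graded

section Socle

variable (R : Type*) [CommSemiring R] [Algebra R A] {ι : Type*}

/-- `IsSocleGen` for the class of `a`, in terms of membership in `I` and without the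
annihilation clause. -/
def SpansSocleMod (X : ι → A) (I : Ideal A) (a : A) : Prop :=
  a ∉ I ∧ ∀ p, (∀ j, X j * p ∈ I) → ∃ c : R, p - c • a ∈ I

variable {R}

theorem SpansSocleMod.mul {X : ι → A} {J : Ideal A} {k : ι} {L P : A}
    (hreg : IsNZDMod J (X k * L)) (h : SpansSocleMod R X (Ideal.span {X k} ⊔ J) P) :
    SpansSocleMod R X (Ideal.span {X k * L} ⊔ J) (L * P) := by
  have hL := hreg.of_mul_right
  refine ⟨fun hP => h.1 (hL.mem_span_singleton_sup_of_mul_mem (mul_comm L P ▸ hP)),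
    fun p hp => ?_⟩
  -- write `p ≡ v L` modulo `J`; then `v` lies in the socle modulo `J + (X k)`
  obtain ⟨v, j, hj, hvj⟩ := Ideal.mem_span_singleton_sup.1 (hp k)
  have hpv : p - v * L ∈ J := hreg.of_mul_left _ (by
    rwa [show (p - v * L) * X k = j by linear_combination -hvj])
  have hv (i : ι) : X i * v ∈ Ideal.span {X k} ⊔ J := by
    refine hL.mem_span_singleton_sup_of_mul_mem ?_
    rw [show X i * v * L = X i * p - X i * (p - v * L) by ring]
    exact sub_mem (hp i) (Ideal.mem_sup_right (J.mul_mem_left _ hpv))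
  obtain ⟨c, hc⟩ := h.2 v hv
  obtain ⟨w, j', hj', hwj'⟩ := Ideal.mem_span_singleton_sup.1 hc
  refine ⟨c, ?_⟩
  rw [← mul_smul_comm, show p - L * c • P = (p - v * L) + w * (X k * L) + j' * L by
    linear_combination (-L) * hwj']
  exact add_mem (add_mem (Ideal.mem_sup_right hpv)
    (Ideal.mem_sup_left (Ideal.mul_mem_left _ _ (Ideal.mem_span_singleton_self _))))
    (Ideal.mem_sup_right (J.mul_mem_right _ hj'))

theorem Ideal.span_range_eq_span_singleton_sup {α : Type*} (g : α → A) (k : α) :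
    Ideal.span (Set.range g) = Ideal.span {g k} ⊔ Ideal.span (g '' {k}ᶜ) := by
  rw [← Set.insert_image_compl_eq_range g k, Ideal.span_insert]

theorem SpansSocleMod.piecewise [DecidableEq ι] {X L : ι → A}
    (h₀ : SpansSocleMod R X (Ideal.span (Set.range X)) 1)
    (hreg : ∀ (s : Finset ι) (k : ι),
      IsNZDMod (Ideal.span (s.piecewise (fun j => X j * L j) X '' {k}ᶜ)) (X k * L k))
    (s : Finset ι) :
    SpansSocleMod R X (Ideal.span (Set.range (s.piecewise (fun j => X j * L j) X)))
      (∏ j ∈ s, L j) := by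
  induction s using Finset.induction_on with
  | empty => simpa using h₀
  | insert k s hk ih =>
    have himage : (insert k s).piecewise (fun j => X j * L j) X '' {k}ᶜ =
        s.piecewise (fun j => X j * L j) X '' {k}ᶜ :=
      Set.image_congr fun j hj => s.piecewise_insert_of_ne _ _ hj
    rw [Ideal.span_range_eq_span_singleton_sup _ k, s.piecewise_eq_of_notMem _ _ hk] at ih
    rw [Ideal.span_range_eq_span_singleton_sup _ k, himage, Finset.piecewise_insert_self,
      Finset.prod_insert hk]
    exact ih.mul (hreg s k)

end Socle

namespace MvPolynomial

theorem spansSocleMod_span_range_X_one {R ι : Type*} [CommRing R] [Nontrivial R] :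
    SpansSocleMod R (X : ι → MvPolynomial ι R) (Ideal.span (Set.range X)) 1 := by
  rw [← Set.image_univ]
  refine ⟨fun h => ?_, fun p _ => ⟨coeff 0 p, ?_⟩⟩
  · obtain ⟨i, -, hi⟩ := mem_ideal_span_X_image.1 h 0 (by simp)
    exact hi rfl
  · rw [mem_ideal_span_X_image]
    intro m hm
    obtain ⟨i, hi⟩ : ∃ i, m i ≠ 0 := by
      by_contra! hm0
      obtain rfl : m = 0 := Finsupp.ext hm0
      simp at hm
    exact ⟨i, trivial, hi⟩

attribute [local instance] gradedAlgebra in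
theorem spansSocleMod_prod_of_isRegularMod {R ι : Type*} [CommRing R] [Nontrivial R] [Fintype ι]
    [DecidableEq ι] {L : ι → MvPolynomial ι R} {d : ι → ℕ} (hL : ∀ j, (L j).IsHomogeneous (d j))
    {l : List ι} (hl : l.Nodup) (hmem : ∀ j, j ∈ l)
    (h : IsRegularMod ⊥ (l.map fun j => X j * L j)) :
    SpansSocleMod R X (Ideal.span (Set.range fun j => X j * L j)) (∏ j, L j) := by
  have hX (j : ι) : ∃ i, 0 < i ∧ X j ∈ homogeneousSubmodule ι R i :=
    ⟨1, one_pos, isHomogeneous_X R j⟩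
  simpa using spansSocleMod_span_range_X_one.piecewise
    (fun s k => by
      simpa using h.isNZDMod_piecewise (Ideal.IsHomogeneous.bot _) hX (fun j => ⟨d j, hL j⟩) hl
        hmem s k) Finset.univ

end MvPolynomial

theorem IsPartialRegSeq.isRegularMod {F σ : Type} [Field F] {k : ℕ}
    {f : Fin k → MvPolynomial σ F} (h : IsPartialRegSeq F σ f) : IsRegularMod ⊥ (List.ofFn f) := by
  rw [isRegularMod_ofFn_iff]
  intro i g hg
  rw [sup_bot_eq] at hg ⊢
  rcases Nat.eq_zero_or_pos i with hi | hi
  · have hempty : {j | j < i} = ∅ := by ext j; simp [Fin.lt_def, hi]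
    simp only [hempty, Set.image_empty, Ideal.span_empty, Ideal.mem_bot] at hg ⊢
    exact (mul_eq_zero.1 hg).resolve_right (h.1 i hi)
  · exact Ideal.Quotient.eq_zero_iff_mem.1 (h.2 i hi g (Ideal.Quotient.eq_zero_iff_mem.2 hg))

theorem isSocleGen_mk_of_spansSocleMod {F σ : Type} [Field F] {I : Ideal (MvPolynomial σ F)}
    {a : MvPolynomial σ F} (h : SpansSocleMod F X I a) (hX : ∀ j, X j * a ∈ I) :
    IsSocleGen F σ I (Ideal.Quotient.mk I a) := by
  refine ⟨by simpa [Ideal.Quotient.eq_zero_iff_mem] using h.1,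
    fun j => by rw [← map_mul, Ideal.Quotient.eq_zero_iff_mem]; exact hX j, fun b hb => ?_⟩
  obtain ⟨p, rfl⟩ := Ideal.Quotient.mk_surjective b
  obtain ⟨c, hc⟩ := h.2 p fun j => by rw [← Ideal.Quotient.eq_zero_iff_mem, map_mul]; exact hb j
  refine ⟨c, ?_⟩
  rw [← Ideal.Quotient.mkₐ_eq_mk F, ← map_smul, Ideal.Quotient.mkₐ_eq_mk,
    Ideal.Quotient.mk_eq_mk_iff_sub_mem]
  exact hc

/-- If `f i = xᵢ · Lᵢ` (each `Lᵢ` a linear form) is a regular sequence in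
`F[x_1,...,x_n]`, then the class of `L₁ ⋯ Lₙ` is a socle generator of the
quotient `F[x_1,...,x_n] ⧸ ⟨f_1,...,f_n⟩`. -/
theorem stmt5 (F : Type) [Field F] (n : ℕ)
    (L : Fin n → MvPolynomial (Fin n) F)
    (hlin : ∀ i, (L i).IsHomogeneous 1)
    (hreg : IsPartialRegSeq F (Fin n) (fun i => X i * L i)) :
    IsSocleGen F (Fin n) (Ideal.span (Set.range fun i => X i * L i))
      (Ideal.Quotient.mk (Ideal.span (Set.range fun i => X i * L i))
        (∏ i : Fin n, L i)) := by
  have hseq := hreg.isRegularMod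
  rw [List.ofFn_eq_map] at hseq
  refine isSocleGen_mk_of_spansSocleMod
    (MvPolynomial.spansSocleMod_prod_of_isRegularMod hlin (List.nodup_finRange n)
      List.mem_finRange hseq) fun j => ?_
  rw [← Finset.mul_prod_erase _ L (Finset.mem_univ j), ← mul_assoc]
  exact Ideal.mul_mem_right _ _ (Ideal.subset_span ⟨j, rfl⟩)
end

section
/- Let F be a field, N_1,...,N_n positive integers, and λ_{i,j}^k ∈ F fixed scalars. In the polynomial ring F[Z_{i,k} | 1 ≤ i ≤ n, 1 ≤ k ≤ N_i], let J be the ideal generated by the products Z_{i,j}·L_{i,j}. For each 1 ≤ i ≤ n set M_i := ∏_{k=0}^{N_i−1} (Z_{i,N_i} − Σ_{j≠i} λ_{i,j}^k Z_{j,N_j}) and L_i := ∏_{k=0}^{N_i−1} L_{i,N_i−k}. Then M_1···M_n ≡ (−1)^n · L_1···L_n modulo J, i.e. M_1···M_n − (−1)^n ∏_{i=1}^n ∏_{j=1}^{N_i} L_{i,j} ∈ J. -/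
open MvPolynomial Finset

/-- The variable `Z_{i, N i}` (top variable of the `i`-th block) in
`F[Z_{i,k} | 1 ≤ i ≤ n, 1 ≤ k ≤ N i]`; the index `⟨i, t⟩` with `t : Fin (N i)`
represents the variable `Z_{i, t+1}`. -/
noncomputable def Ztop {F : Type} [Field F] {n : ℕ} (N : Fin n → ℕ) (hN : ∀ i, 0 < N i)
    (i : Fin n) : MvPolynomial ((i : Fin n) × Fin (N i)) F :=
  X ⟨i, ⟨N i - 1, Nat.sub_lt (hN i) Nat.one_pos⟩⟩

/-- The linear form `L_{i,j}` (at index `p = ⟨i, j-1⟩`):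
`L_{i,N i} = Z_{i,1} + ⋯ + Z_{i,N i - 1} - Z_{i,N i} + ∑_{j ≠ i} λ⁰_{i,j} Z_{j,N j}`,
and for `1 ≤ k ≤ N i - 1`,
`L_{i,k} = Z_{i,1} + ⋯ + Z_{i,k} - ∑_{j ≠ i} (λ^{N i - k}_{i,j} - λ⁰_{i,j}) Z_{j,N j}`. -/
noncomputable def Lform {F : Type} [Field F] {n : ℕ} (N : Fin n → ℕ) (hN : ∀ i, 0 < N i)
    (lam : Fin n → Fin n → ℕ → F) (p : (i : Fin n) × Fin (N i)) :
    MvPolynomial ((i : Fin n) × Fin (N i)) F :=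
  if p.2.val + 1 = N p.1 then
    (∑ t ∈ univ.filter fun t : Fin (N p.1) => t.val + 1 < N p.1, X (⟨p.1, t⟩ : (i : Fin n) × Fin (N i)))
      - X p
      + ∑ j ∈ univ.erase p.1, C (lam p.1 j 0) * Ztop N hN j
  else
    (∑ t ∈ univ.filter fun t : Fin (N p.1) => t.val ≤ p.2.val, X (⟨p.1, t⟩ : (i : Fin n) × Fin (N i)))
      - ∑ j ∈ univ.erase p.1,
          C (lam p.1 j (N p.1 - (p.2.val + 1)) - lam p.1 j 0) * Ztop N hN j

/-!
Work modulo `J`, write `Y_i = Z_{i,N_i}`, `S_k = Z_{i,1} + ⋯ + Z_{i,k}` inside block `i` and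
`a_k = ∑_{j ≠ i} λ^k_{i,j} Y_j`. The generators of `J` in block `i` say
`Z_{i,k} S_k ≡ Z_{i,k} (a_{N_i-k} - a_0)` for `k < N_i` and `Y_i (Y_i - a_0) ≡ Y_i S_{N_i-1}`.
A downward induction on `k` then shows `Y_i Z_{i,k} (Y_i - a_1) ⋯ (Y_i - a_{N_i-k}) ≡ 0`, hence
`Y_i M_i ≡ 0`; trivially `Y_i L_i ≡ 0`. If moreover the `Y_j`, `j ≠ i`, are set to zero, all `a_k`
vanish, `M_i` becomes `Y_i^{N_i}` and `L_i` becomes `(S_{N_i-1} - Y_i) S_1 ⋯ S_{N_i-1}`; the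
relations `Z_{i,k} S_k = 0` give `S_m^m = S_1 ⋯ S_m` and `S_m^{m+1} = 0`, so `M_i + L_i = 0`
there. Thus `M_i + L_i` lies in `J + (Y_j : j ≠ i)`, and since each `Y_j` is killed modulo `J` by
both `M_j` and `L_j`, the factors `M_i` of `M_1 ⋯ M_n` can be replaced by `-L_i` one at a time.
-/

section PartialSums

variable {A : Type*} [CommRing A] {m : ℕ} {x : ℕ → A}

theorem mul_eq_zero_of_mul_eq_zero_of_dvd {a b c : A} (h : a * b = 0) (hbc : b ∣ c) :
    a * c = 0 :=
  zero_dvd_iff.mp (h ▸ mul_dvd_mul_left a hbc)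

section Perturbed

variable {Y W : A} {c : ℕ → A} (hx : ∀ t < m, x t * (∑ s ∈ range (t + 1), x s - c (m - t)) = 0)
  (hY : Y * (∑ s ∈ range m, x s - W) = 0)
include hx hY

theorem mul_mul_prod_range_sub_eq_zero {t : ℕ} (ht : t < m) :
    Y * x t * ∏ k ∈ range (m - t), (W - c (k + 1)) = 0 := by
  induction hd : m - t using Nat.strong_induction_on generalizing t with
  | _ d ih =>
    obtain ⟨e, rfl⟩ : ∃ e, d = e + 1 := ⟨d - 1, by omega⟩
    set P := ∏ k ∈ range e, (W - c (k + 1))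
    have htail : ∀ s ∈ Ico (t + 1) m, Y * x s * P = 0 := fun s hs ↦ by
      obtain ⟨hts, hsm⟩ := mem_Ico.1 hs
      exact mul_eq_zero_of_mul_eq_zero_of_dvd (ih (m - s) (by omega) hsm rfl)
        (prod_dvd_prod_of_subset _ _ _ (range_subset_range.2 (by omega)))
    have hsplit := sum_range_add_sum_Ico x (show t + 1 ≤ m by omega)
    -- modulo the relations, `Y x_t (W - c (m - t)) = Y x_t (x_{t+1} + ⋯ + x_{m-1})`
    calc Y * x t * ∏ k ∈ range (e + 1), (W - c (k + 1))
        = x t * Y * P * ∑ s ∈ Ico (t + 1) m, x s := by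
          rw [prod_range_succ, ← hd]
          linear_combination -(x t * P) * hY + (Y * P) * hx t ht - (Y * x t * P) * hsplit
      _ = ∑ s ∈ Ico (t + 1) m, x t * (Y * x s * P) := by
          rw [mul_sum]; exact sum_congr rfl fun s _ ↦ by ring
      _ = 0 := sum_eq_zero fun s hs ↦ by rw [htail s hs, mul_zero]

theorem mul_mul_prod_range_eq_zero : Y * (W * ∏ k ∈ range m, (W - c (k + 1))) = 0 := by
  calc Y * (W * ∏ k ∈ range m, (W - c (k + 1)))
      = ∑ t ∈ range m, Y * x t * ∏ k ∈ range m, (W - c (k + 1)) := by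
        rw [← sum_mul, ← mul_sum]
        linear_combination -(∏ k ∈ range m, (W - c (k + 1))) * hY
    _ = 0 := sum_eq_zero fun t ht ↦ mul_eq_zero_of_mul_eq_zero_of_dvd
        (mul_mul_prod_range_sub_eq_zero hx hY (mem_range.1 ht))
        (prod_dvd_prod_of_subset _ _ _ (range_subset_range.2 (Nat.sub_le m t)))

end Perturbed

section Nilpotent

variable (hx : ∀ t < m, x t * ∑ s ∈ range (t + 1), x s = 0)
include hx

theorem sum_range_mul_prod_Ico {l : ℕ} (hl : l ≤ m) :
    (∑ s ∈ range m, x s) * ∏ u ∈ Ico l m, ∑ s ∈ range (u + 1), x s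
      = (∑ s ∈ range l, x s) * ∏ u ∈ Ico l m, ∑ s ∈ range (u + 1), x s := by
  rw [← sum_range_add_sum_Ico x hl, add_mul, add_eq_left, sum_mul]
  refine sum_eq_zero fun s hs ↦ ?_
  rw [← mul_prod_erase _ _ hs, ← mul_assoc, hx s (mem_Ico.1 hs).2, zero_mul]

theorem sum_range_pow_eq_prod_Ico {d : ℕ} (hd : d ≤ m) :
    (∑ s ∈ range m, x s) ^ d = ∏ u ∈ Ico (m - d) m, ∑ s ∈ range (u + 1), x s := by
  induction d with
  | zero => simp
  | succ d ih =>
    rw [pow_succ', ih (by omega), sum_range_mul_prod_Ico hx (Nat.sub_le m d),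
      prod_eq_prod_Ico_succ_bot (by omega : m - (d + 1) < m),
      show m - (d + 1) + 1 = m - d by omega]

theorem pow_succ_add_sub_mul_prod_eq_zero {Y : A} (hY : Y * (∑ s ∈ range m, x s - Y) = 0) :
    Y ^ (m + 1) + (∑ s ∈ range m, x s - Y) * ∏ t ∈ range m, ∑ s ∈ range (t + 1), x s = 0 := by
  have hpow : ∀ k, Y ^ (k + 1) = Y * (∑ s ∈ range m, x s) ^ k := by
    intro k
    induction k with
    | zero => simp
    | succ k ih => rw [pow_succ, ih]; linear_combination -(∑ s ∈ range m, x s) ^ k * hY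
  have hnil := sum_range_mul_prod_Ico hx (Nat.zero_le m)
  rw [range_zero, sum_empty, zero_mul, ← range_eq_Ico] at hnil
  rw [hpow, sum_range_pow_eq_prod_Ico hx le_rfl, Nat.sub_self, ← range_eq_Ico]
  linear_combination hnil

end Nilpotent

end PartialSums

namespace Ideal

variable {ι R : Type*} [Fintype ι] [CommRing R] {J : Ideal R} {y f g : ι → R}

theorem prod_sub_prod_mul_prod_compl_mem [DecidableEq ι] (hf : ∀ i, y i * f i ∈ J)
    (hg : ∀ i, y i * g i ∈ J) (hfg : ∀ i, f i - g i ∈ J ⊔ span (y '' {i}ᶜ)) (s : Finset ι) :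
    (∏ i ∈ s, f i - ∏ i ∈ s, g i) * ∏ i ∈ sᶜ, f i ∈ J := by
  induction s using Finset.induction_on with
  | empty => simp
  | @insert a s ha ih =>
    set P := (∏ i ∈ s, g i) * ∏ i ∈ (insert a s)ᶜ, f i
    have hP : J ⊔ span (y '' {a}ᶜ) ≤ Submodule.comap (LinearMap.mulRight R P) J := by
      refine sup_le (fun r hr ↦ J.mul_mem_right P hr) (span_le.2 ?_)
      rintro _ ⟨j, hj, rfl⟩
      by_cases hjs : j ∈ s
      · exact J.mem_of_dvd
          (mul_dvd_mul_left _ (dvd_mul_of_dvd_left (dvd_prod_of_mem g hjs) _)) (hg j)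
      · have hj' : j ∈ (insert a s)ᶜ := by simp_all
        exact J.mem_of_dvd
          (mul_dvd_mul_left _ (dvd_mul_of_dvd_right (dvd_prod_of_mem f hj') _)) (hf j)
    have hcompl : ∏ i ∈ sᶜ, f i = f a * ∏ i ∈ (insert a s)ᶜ, f i := by
      rw [compl_insert, mul_prod_erase _ _ (mem_compl.2 ha)]
    have hsplit : (∏ i ∈ insert a s, f i - ∏ i ∈ insert a s, g i) * ∏ i ∈ (insert a s)ᶜ, f i
        = (∏ i ∈ s, f i - ∏ i ∈ s, g i) * ∏ i ∈ sᶜ, f i + (f a - g a) * P := by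
      rw [hcompl, prod_insert ha, prod_insert ha]; ring
    rw [hsplit]
    exact J.add_mem ih (hP (hfg a))

theorem prod_sub_prod_mem (hf : ∀ i, y i * f i ∈ J) (hg : ∀ i, y i * g i ∈ J)
    (hfg : ∀ i, f i - g i ∈ J ⊔ span (y '' {i}ᶜ)) :
    ∏ i, f i - ∏ i, g i ∈ J := by
  classical
  simpa using prod_sub_prod_mul_prod_compl_mem hf hg hfg univ

end Ideal

section Block

variable {F : Type} [Field F] {n : ℕ} (N : Fin n → ℕ) (hN : ∀ i, 0 < N i)
  (lam : Fin n → Fin n → ℕ → F)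

/-- `Z_{i, s+1}`, extended by `0` for `s ≥ N i`. -/
noncomputable def blockVar (i : Fin n) (s : ℕ) : MvPolynomial ((i : Fin n) × Fin (N i)) F :=
  if h : s < N i then X ⟨i, ⟨s, h⟩⟩ else 0

noncomputable def crossForm (i : Fin n) (k : ℕ) : MvPolynomial ((i : Fin n) × Fin (N i)) F :=
  ∑ j ∈ univ.erase i, C (lam i j k) * Ztop N hN j

/-- `blockM` and `blockL` are the products `M_i` and `L_i` of the statement. -/
noncomputable def blockM (i : Fin n) : MvPolynomial ((i : Fin n) × Fin (N i)) F :=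
  ∏ k ∈ range (N i), (Ztop N hN i - crossForm N hN lam i k)

noncomputable def blockL (i : Fin n) : MvPolynomial ((i : Fin n) × Fin (N i)) F :=
  ∏ t : Fin (N i), Lform N hN lam ⟨i, t⟩

theorem blockVar_of_lt (i : Fin n) {s : ℕ} (hs : s < N i) :
    blockVar (F := F) N i s = X ⟨i, ⟨s, hs⟩⟩ :=
  dif_pos hs

theorem sum_filter_X_eq_sum_blockVar (i : Fin n) (P : ℕ → Prop) [DecidablePred P] :
    ∑ t ∈ univ.filter (fun t : Fin (N i) => P t), (X ⟨i, t⟩ : MvPolynomial _ F)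
      = ∑ s ∈ (range (N i)).filter P, blockVar N i s := by
  rw [sum_filter, sum_filter, sum_range]
  exact sum_congr rfl fun t _ ↦ by rw [blockVar_of_lt]

theorem Lform_of_lt (i : Fin n) (t : Fin (N i)) (ht : (t : ℕ) + 1 < N i) :
    Lform N hN lam ⟨i, t⟩ = ∑ s ∈ range (t + 1), blockVar N i s
      - (crossForm N hN lam i (N i - 1 - t) - crossForm N hN lam i 0) := by
  have hfilter : (range (N i)).filter (· ≤ (t : ℕ)) = range (t + 1) := by
    ext s; simp only [mem_filter, mem_range]; omega
  rw [Lform, if_neg ht.ne, sum_filter_X_eq_sum_blockVar N i (· ≤ (t : ℕ)), hfilter, crossForm,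
    crossForm, ← sum_sub_distrib, Nat.sub_sub, Nat.add_comm 1]
  simp only [map_sub, sub_mul]

theorem Lform_of_add_one_eq (i : Fin n) (t : Fin (N i)) (ht : (t : ℕ) + 1 = N i) :
    Lform N hN lam ⟨i, t⟩ = ∑ s ∈ range (N i - 1), blockVar N i s
      - (Ztop N hN i - crossForm N hN lam i 0) := by
  have hfilter : (range (N i)).filter (· + 1 < N i) = range (N i - 1) := by
    ext s; simp only [mem_filter, mem_range]; omega
  have htop : (X ⟨i, t⟩ : MvPolynomial _ F) = Ztop N hN i := by
    rw [Ztop, show t = ⟨N i - 1, Nat.sub_lt (hN i) Nat.one_pos⟩ from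
      Fin.ext (by simp only; omega)]
  rw [Lform, if_pos ht, sum_filter_X_eq_sum_blockVar N i (· + 1 < N i), hfilter, htop, crossForm]
  ring

theorem blockM_eq (i : Fin n) : blockM N hN lam i = (Ztop N hN i - crossForm N hN lam i 0)
    * ∏ k ∈ range (N i - 1), (Ztop N hN i - crossForm N hN lam i (k + 1)) := by
  rw [blockM, ← Nat.sub_add_cancel (hN i), prod_range_succ', mul_comm, Nat.add_sub_cancel]

theorem blockL_eq (i : Fin n) : blockL N hN lam i
    = (∏ t ∈ range (N i - 1), (∑ s ∈ range (t + 1), blockVar N i s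
        - (crossForm N hN lam i (N i - 1 - t) - crossForm N hN lam i 0)))
      * (∑ s ∈ range (N i - 1), blockVar N i s - (Ztop N hN i - crossForm N hN lam i 0)) := by
  let g : ℕ → MvPolynomial ((i : Fin n) × Fin (N i)) F :=
    fun s ↦ if h : s < N i then Lform N hN lam ⟨i, ⟨s, h⟩⟩ else 1
  have hg : blockL N hN lam i = ∏ s ∈ range (N i - 1 + 1), g s := by
    rw [Nat.sub_add_cancel (hN i), prod_range, blockL]
    exact prod_congr rfl fun t _ ↦ by simp only [g, dif_pos t.isLt]
  rw [hg, prod_range_succ]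
  congr 1
  · refine prod_congr rfl fun t ht ↦ ?_
    rw [mem_range] at ht
    simp only [g, dif_pos (show t < N i by omega)]
    exact Lform_of_lt N hN lam i _ (by simp only; omega)
  · simp only [g, dif_pos (Nat.sub_lt (hN i) Nat.one_pos)]
    exact Lform_of_add_one_eq N hN lam i _ (Nat.sub_add_cancel (hN i))

section Relations

variable {B : Type*} [CommRing B] (φ : MvPolynomial ((i : Fin n) × Fin (N i)) F →+* B)
  (hφ : ∀ p, φ (X p * Lform N hN lam p) = 0)
include hφ

theorem map_blockVar_mul_eq_zero (i : Fin n) (t : ℕ) (ht : t < N i - 1) :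
    φ (blockVar N i t) * (∑ s ∈ range (t + 1), φ (blockVar N i s)
      - φ (crossForm N hN lam i (N i - 1 - t) - crossForm N hN lam i 0)) = 0 := by
  have h := hφ ⟨i, ⟨t, by omega⟩⟩
  rwa [map_mul, Lform_of_lt N hN lam i _ (by simp only; omega), map_sub, map_sum,
    ← blockVar_of_lt] at h

theorem map_Ztop_mul_eq_zero (i : Fin n) :
    φ (Ztop N hN i) * (∑ s ∈ range (N i - 1), φ (blockVar N i s)
      - φ (Ztop N hN i - crossForm N hN lam i 0)) = 0 := by
  have h := hφ ⟨i, ⟨N i - 1, Nat.sub_lt (hN i) Nat.one_pos⟩⟩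
  rwa [map_mul, Lform_of_add_one_eq N hN lam i _ (Nat.sub_add_cancel (hN i)), map_sub,
    map_sum] at h

theorem map_Ztop_mul_map_blockM (i : Fin n) : φ (Ztop N hN i) * φ (blockM N hN lam i) = 0 := by
  have h := mul_mul_prod_range_eq_zero (x := fun s ↦ φ (blockVar N i s))
    (c := fun d ↦ φ (crossForm N hN lam i d - crossForm N hN lam i 0))
    (map_blockVar_mul_eq_zero N hN lam φ hφ i) (map_Ztop_mul_eq_zero N hN lam φ hφ i)
  simpa only [← map_sub, sub_sub_sub_cancel_right, ← map_prod, ← map_mul, ← blockM_eq] using h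

theorem map_Ztop_mul_map_blockL (i : Fin n) : φ (Ztop N hN i) * φ (blockL N hN lam i) = 0 := by
  rw [blockL_eq, map_mul, mul_left_comm, map_sub, map_sum, map_Ztop_mul_eq_zero N hN lam φ hφ i,
    mul_zero]

theorem map_blockM_add_map_blockL (i : Fin n) (hT : ∀ j ≠ i, φ (Ztop N hN j) = 0) :
    φ (blockM N hN lam i) + φ (blockL N hN lam i) = 0 := by
  have hcross : ∀ k, φ (crossForm N hN lam i k) = 0 := fun k ↦ by
    rw [crossForm, map_sum]
    exact sum_eq_zero fun j hj ↦ by rw [map_mul, hT j (ne_of_mem_erase hj), mul_zero]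
  have hx : ∀ t < N i - 1, φ (blockVar N i t) * ∑ s ∈ range (t + 1), φ (blockVar N i s) = 0 :=
    fun t ht ↦ by
      simpa only [map_sub, hcross, sub_zero] using map_blockVar_mul_eq_zero N hN lam φ hφ i t ht
  have hY : φ (Ztop N hN i) * (∑ s ∈ range (N i - 1), φ (blockVar N i s) - φ (Ztop N hN i))
      = 0 := by
    simpa only [map_sub, hcross, sub_zero] using map_Ztop_mul_eq_zero N hN lam φ hφ i
  have h := pow_succ_add_sub_mul_prod_eq_zero hx hY
  rw [Nat.sub_add_cancel (hN i)] at h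
  rw [blockM, blockL_eq]
  simp only [map_prod, map_mul, map_sub, map_sum, hcross, sub_zero, prod_const, card_range]
  linear_combination h

end Relations

end Block

/-- With `M i = ∏_{k=0}^{N i - 1} (Z_{i,N i} - ∑_{j ≠ i} λᵏ_{i,j} Z_{j,N j})` and
`L_i = ∏_{k=0}^{N i - 1} L_{i, N i - k}`, one has
`M_1 ⋯ M_n ≡ (-1)ⁿ · L_1 ⋯ L_n` modulo the ideal `J = ⟨Z_{i,j} · L_{i,j}⟩`. -/
theorem stmt10 (F : Type) [Field F] (n : ℕ) (N : Fin n → ℕ) (hN : ∀ i, 0 < N i)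
    (lam : Fin n → Fin n → ℕ → F) :
    (∏ i : Fin n, ∏ k ∈ Finset.range (N i),
        (Ztop N hN i - ∑ j ∈ univ.erase i, C (lam i j k) * Ztop N hN j))
      - (-1 : MvPolynomial ((i : Fin n) × Fin (N i)) F) ^ n *
          ∏ p : (i : Fin n) × Fin (N i), Lform N hN lam p ∈
    Ideal.span (Set.range fun p : (i : Fin n) × Fin (N i) =>
      X p * Lform N hN lam p) := by
  set J := Ideal.span (Set.range fun p : (i : Fin n) × Fin (N i) => X p * Lform N hN lam p)
  have hJ : ∀ p, Ideal.Quotient.mk J (X p * Lform N hN lam p) = 0 :=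
    fun p ↦ Ideal.Quotient.eq_zero_iff_mem.2 (Ideal.subset_span ⟨p, rfl⟩)
  have hM : ∀ i, Ztop N hN i * blockM N hN lam i ∈ J := fun i ↦ by
    rw [← Ideal.Quotient.eq_zero_iff_mem, map_mul]
    exact map_Ztop_mul_map_blockM N hN lam _ hJ i
  have hL : ∀ i, Ztop N hN i * -blockL N hN lam i ∈ J := fun i ↦ by
    rw [mul_neg, neg_mem_iff, ← Ideal.Quotient.eq_zero_iff_mem, map_mul]
    exact map_Ztop_mul_map_blockL N hN lam _ hJ i
  have hML : ∀ i,
      blockM N hN lam i - -blockL N hN lam i ∈ J ⊔ Ideal.span (Ztop N hN '' {i}ᶜ) := by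
    intro i
    rw [sub_neg_eq_add, ← Ideal.Quotient.eq_zero_iff_mem, map_add]
    refine map_blockM_add_map_blockL N hN lam _ (fun p ↦ ?_) i fun j hj ↦ ?_ <;>
      refine Ideal.Quotient.eq_zero_iff_mem.2 ?_
    · exact Ideal.mem_sup_left (Ideal.subset_span ⟨p, rfl⟩)
    · exact Ideal.mem_sup_right (Ideal.subset_span ⟨j, hj, rfl⟩)
  have h := Ideal.prod_sub_prod_mem hM hL hML
  rw [prod_neg, card_univ, Fintype.card_fin] at h
  rwa [Fintype.prod_sigma]
end
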